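/- Let n ≥ 1. The one-relator presented group ⟨x, t | ρ_n(x,t)⟩ is torsion-free: its only element of finite order is the identity. -/

import Mathlib

/-!
Put `y = t x t⁻¹`. The relation says `y x y⁻¹ = x ^ (n + 1)`, so the group is the HNN
extension of the Baumslag–Solitar group `BS(1, n + 1) = ⟨x, y | y x y⁻¹ = x ^ (n + 1)⟩`
whose stable letter `t` conjugates `⟨x⟩` onto `⟨y⟩`; `BS(1, n + 1)` is in turn an HNN
extension of `ℤ`.
HNN extensions of torsion-free groups are torsion-free: an element that is not conjugate into
the base group is conjugate to a nonempty cyclically reduced word, all of whose powers are again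
reduced words and hence, by Britton's lemma, nontrivial.
-/

def rhoWord {G : Type*} [Group G] (k : ℕ) (x t : G) : G :=
  (t * x * t⁻¹) * x * (t * x * t⁻¹)⁻¹ * x ^ (-(k + 1 : ℤ))

open Subgroup HNNExtension Multiplicative

/-- Torsion-freeness in the usual sense: `IsMulTorsionFree` is stronger for non-commutative
groups, where it also demands unique roots. -/
def Monoid.IsTorsionFree (G : Type*) [Monoid G] : Prop :=
  ∀ g : G, g ≠ 1 → ¬IsOfFinOrder g

theorem Monoid.IsTorsionFree.of_injective {G H : Type*} [Monoid G] [Monoid H] {f : G →* H}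
    (hf : Function.Injective f) (hH : Monoid.IsTorsionFree H) : Monoid.IsTorsionFree G :=
  fun g hg hfin => hH (f g) ((map_ne_one_iff f hf).2 hg) (f.isOfFinOrder hfin)

theorem not_isOfFinOrder_ofAdd {k : ℤ} (hk : k ≠ 0) : ¬IsOfFinOrder (ofAdd k) :=
  not_isOfFinOrder_of_isMulTorsionFree (by simpa using hk)

section InfiniteCyclic

variable {G H : Type*} [Group G] [Group H] {x : G} {y : H}

theorem zpowersHom_injective (hx : ¬IsOfFinOrder x) : Function.Injective (zpowersHom G x) :=
  (injective_zpow_iff_not_isOfFinOrder.2 hx).comp toAdd.injective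

noncomputable def zpowersEquiv (hx : ¬IsOfFinOrder x) : Multiplicative ℤ ≃* zpowers x :=
  (MonoidHom.ofInjective (zpowersHom_injective hx)).trans
    (MulEquiv.subgroupCongr (range_zpowersHom x))

theorem zpowersEquiv_ofAdd (hx : ¬IsOfFinOrder x) (k : ℤ) :
    (zpowersEquiv hx (ofAdd k) : G) = x ^ k := rfl

noncomputable def zpowersMulEquiv (hx : ¬IsOfFinOrder x) (hy : ¬IsOfFinOrder y) :
    zpowers x ≃* zpowers y :=
  (zpowersEquiv hx).symm.trans (zpowersEquiv hy)

theorem zpowersMulEquiv_zpow (hx : ¬IsOfFinOrder x) (hy : ¬IsOfFinOrder y) (k : ℤ)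
    (h : x ^ k ∈ zpowers x) : (zpowersMulEquiv hx hy ⟨x ^ k, h⟩ : H) = y ^ k := by
  have hk : (⟨x ^ k, h⟩ : zpowers x) = zpowersEquiv hx (ofAdd k) := rfl
  rw [zpowersMulEquiv, MulEquiv.trans_apply, hk, MulEquiv.symm_apply_apply, zpowersEquiv_ofAdd]

end InfiniteCyclic

namespace HNNExtension

open NormalWord

section TorsionFree

variable {G : Type*} [Group G] {A B : Subgroup G}

/-- The letters `a, b` do not start a pinch `t ^ u * g * t ^ (-u)` with `g ∈ toSubgroup A B u`;
this is the chain condition of `ReducedWord`. -/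
def NoPinch (A B : Subgroup G) (a b : ℤˣ × G) : Prop :=
  a.2 ∈ toSubgroup A B a.1 → a.1 = b.1

def IsCyclicallyReduced (A B : Subgroup G) (L : List (ℤˣ × G)) : Prop :=
  L.IsChain (NoPinch A B) ∧ ∀ a ∈ L.getLast?, ∀ b ∈ L.head?, NoPinch A B a b

theorem IsCyclicallyReduced.isChain_flatten_replicate {L : List (ℤˣ × G)}
    (h : IsCyclicallyReduced A B L) (k : ℕ) :
    ((List.replicate k L).flatten).IsChain (NoPinch A B) := by
  rcases eq_or_ne L [] with rfl | hL
  · simp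
  rw [List.isChain_flatten (by simp [List.mem_replicate, hL.symm])]
  exact ⟨by simp [List.mem_replicate, h.1], List.isChain_replicate_of_rel _ h.2⟩

theorem isChain_concat_mul {M : List (ℤˣ × G)} {p : ℤˣ × G}
    (hM : (M ++ [p]).IsChain (NoPinch A B)) (g : G) :
    (M ++ [(p.1, p.2 * g)]).IsChain (NoPinch A B) := by
  rw [List.isChain_append] at hM ⊢
  exact ⟨hM.1, List.isChain_singleton _, by simpa [NoPinch] using hM.2.2⟩

variable (φ : A ≃* B)

def wordProd (L : List (ℤˣ × G)) : HNNExtension G A B φ :=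
  (L.map fun p => t ^ (p.1 : ℤ) * of p.2).prod

@[simp] theorem wordProd_nil : wordProd φ ([] : List (ℤˣ × G)) = 1 := rfl

@[simp] theorem wordProd_append (L M : List (ℤˣ × G)) :
    wordProd φ (L ++ M) = wordProd φ L * wordProd φ M := by
  simp [wordProd]

@[simp] theorem wordProd_cons (p : ℤˣ × G) (L : List (ℤˣ × G)) :
    wordProd φ (p :: L) = t ^ (p.1 : ℤ) * of p.2 * wordProd φ L := by
  simp [wordProd]

theorem wordProd_flatten_replicate (L : List (ℤˣ × G)) (k : ℕ) :
    wordProd φ (List.replicate k L).flatten = wordProd φ L ^ k := by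
  simp [wordProd, List.map_flatten, List.prod_flatten]

theorem wordProd_concat_mul (M : List (ℤˣ × G)) (p : ℤˣ × G) (g : G) :
    wordProd φ (M ++ [p]) * of g = wordProd φ (M ++ [(p.1, p.2 * g)]) := by
  simp [mul_assoc]

theorem NormalWord.ReducedWord.prod_eq (w : ReducedWord G A B) :
    w.prod φ = of w.head * wordProd φ w.toList := rfl

theorem NormalWord.ReducedWord.exists_prod_eq (x : HNNExtension G A B φ) :
    ∃ w : ReducedWord G A B, w.prod φ = x := by
  obtain ⟨d⟩ := TransversalPair.nonempty G A B
  exact ⟨(equiv φ d x).toReducedWord, (equiv φ d).symm_apply_apply x⟩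

theorem not_isOfFinOrder_wordProd {L : List (ℤˣ × G)} (hL : L ≠ [])
    (h : IsCyclicallyReduced A B L) : ¬IsOfFinOrder (wordProd φ L) := by
  intro hfin
  obtain ⟨k, hk, hpow⟩ := isOfFinOrder_iff_pow_eq_one.1 hfin
  let w : ReducedWord G A B := ⟨1, (List.replicate k L).flatten, h.isChain_flatten_replicate k⟩
  have hw : w.prod φ ∈ (of : G →* HNNExtension G A B φ).range :=
    ⟨1, by rw [ReducedWord.prod_eq]; simp [w, wordProd_flatten_replicate, hpow]⟩
  have hnil := ReducedWord.toList_eq_nil_of_mem_of_range φ w hw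
  simp only [w, List.flatten_eq_nil_iff, List.mem_replicate] at hnil
  exact hL (hnil L ⟨hk.ne', rfl⟩)

theorem of_toSubgroupEquiv (u : ℤˣ) (a : toSubgroup A B u) :
    (of (toSubgroupEquiv φ u a : G) : HNNExtension G A B φ) =
      t ^ (u : ℤ) * of (a : G) * (t ^ (u : ℤ))⁻¹ := by
  rcases Int.units_eq_one_or u with rfl | rfl
  · simp only [toSubgroupEquiv_one, Units.val_one, zpow_one]
    exact equiv_eq_conj a
  · simp only [toSubgroupEquiv_neg_one, Units.val_neg, Units.val_one, zpow_neg, zpow_one, inv_inv]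
    exact equiv_symm_eq_conj a

/-- Conjugating by the first letter moves it behind the last one, where the two collapse into
an element of the base group. -/
theorem isConj_wordProd_of_pinch {p q : ℤˣ × G} (hq : q.2 ∈ toSubgroup A B q.1)
    (hqp : q.1 ≠ p.1) (M : List (ℤˣ × G)) :
    IsConj (wordProd φ (p :: M ++ [q]))
      (wordProd φ M * of ((toSubgroupEquiv φ q.1 ⟨q.2, hq⟩ : G) * p.2)) := by
  have hp : (p.1 : ℤ) = -q.1 := by rw [Int.units_ne_iff_eq_neg.1 hqp.symm, Units.val_neg]
  refine isConj_iff.2 ⟨(t ^ (p.1 : ℤ) * of p.2)⁻¹, ?_⟩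
  simp only [wordProd_append, wordProd_cons, wordProd_nil, mul_one, map_mul, of_toSubgroupEquiv, hp]
  group

theorem exists_isConj_of_or_isCyclicallyReduced {L : List (ℤˣ × G)}
    (hL : L.IsChain (NoPinch A B)) (g : G) :
    (∃ g', IsConj (wordProd φ L * of g) (of g')) ∨
      ∃ L', L' ≠ [] ∧ IsCyclicallyReduced A B L' ∧
        IsConj (wordProd φ L * of g) (wordProd φ L') := by
  induction L using List.bidirectionalRec generalizing g with
  | nil => exact .inl ⟨g, isConj_iff.2 ⟨1, by simp⟩⟩
  | singleton p =>
    refine .inr ⟨[(p.1, p.2 * g)], by simp, ⟨List.isChain_singleton _, by simp [NoPinch]⟩,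
      isConj_iff.2 ⟨1, by simp [mul_assoc]⟩⟩
  | cons_append p M q ih =>
    rw [← List.cons_append] at hL ⊢
    have hchain := isChain_concat_mul hL g
    rw [wordProd_concat_mul]
    by_cases hnp : NoPinch A B (q.1, q.2 * g) p
    · refine .inr ⟨_, by simp, ⟨hchain, ?_⟩, IsConj.refl _⟩
      rw [List.getLast?_concat]
      simpa using hnp
    obtain ⟨hq, hqp⟩ := Classical.not_imp.1 hnp
    have hpinch := isConj_wordProd_of_pinch φ hq hqp M
    rcases ih (hL.infix ⟨[p], [q], rfl⟩) (toSubgroupEquiv φ q.1 ⟨_, hq⟩ * p.2) with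
      ⟨g', h⟩ | ⟨L', hne, hcyc, h⟩
    · exact .inl ⟨g', hpinch.trans h⟩
    · exact .inr ⟨L', hne, hcyc, hpinch.trans h⟩

theorem exists_isConj_of_of_isOfFinOrder {x : HNNExtension G A B φ} (hx : IsOfFinOrder x) :
    ∃ g, IsConj x (of g) := by
  obtain ⟨w, rfl⟩ := ReducedWord.exists_prod_eq φ x
  have hw : IsConj (w.prod φ) (wordProd φ w.toList * of w.head) :=
    isConj_iff.2 ⟨(of w.head)⁻¹, by simp [ReducedWord.prod_eq]⟩
  rcases exists_isConj_of_or_isCyclicallyReduced φ w.chain w.head with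
    ⟨g, hg⟩ | ⟨L, hne, hcyc, hL⟩
  · exact ⟨g, hw.trans hg⟩
  · exact absurd ((hw.trans hL).isOfFinOrder hx) (not_isOfFinOrder_wordProd φ hne hcyc)

theorem isTorsionFree (hG : Monoid.IsTorsionFree G) :
    Monoid.IsTorsionFree (HNNExtension G A B φ) := by
  refine fun x hx hfin => hx ?_
  obtain ⟨g, hg⟩ := exists_isConj_of_of_isOfFinOrder φ hfin
  have hg1 : g = 1 := by_contra fun h =>
    hG g h ((of_injective φ).isOfFinOrder_iff.1 (hg.isOfFinOrder hfin))
  rw [hg1, map_one] at hg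
  exact isConj_one_right.1 hg.symm

theorem not_isOfFinOrder_t : ¬IsOfFinOrder (t : HNNExtension G A B φ) := fun h =>
  not_isOfFinOrder_ofAdd one_ne_zero
    ((lift (1 : G →* Multiplicative ℤ) (ofAdd 1) (by simp)).isOfFinOrder h)

end TorsionFree

section InfiniteCyclic

variable {G H : Type*} [Group G] [Group H] {x y : G}
  (hx : ¬IsOfFinOrder x) (hy : ¬IsOfFinOrder y)

theorem t_mul_of_mul_inv_t :
    (t * of x * t⁻¹ : HNNExtension G (zpowers x) (zpowers y) (zpowersMulEquiv hx hy)) =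
      of y := by
  have h := zpowersMulEquiv_zpow hx hy 1 (by simp)
  simp only [zpow_one] at h
  rw [← equiv_eq_conj (φ := zpowersMulEquiv hx hy) ⟨x, mem_zpowers x⟩, h]

noncomputable def liftZPowers (f : G →* H) (w : H) (hw : w * f x * w⁻¹ = f y) :
    HNNExtension G (zpowers x) (zpowers y) (zpowersMulEquiv hx hy) →* H :=
  lift f w fun ⟨a, ha⟩ => by
    obtain ⟨k, rfl⟩ := mem_zpowers_iff.1 ha
    rw [zpowersMulEquiv_zpow, map_zpow, map_zpow, ← hw, conj_zpow]
    group

end InfiniteCyclic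

end HNNExtension

/-- The Baumslag–Solitar group `BS(1, m) = ⟨a, s | s a s⁻¹ = a ^ m⟩`. -/
noncomputable abbrev BS1 (m : ℤ) (hm : m ≠ 0) :=
  HNNExtension (Multiplicative ℤ) (zpowers (ofAdd 1)) (zpowers (ofAdd m))
    (zpowersMulEquiv (not_isOfFinOrder_ofAdd one_ne_zero) (not_isOfFinOrder_ofAdd hm))

theorem BS1.not_isOfFinOrder_of (m : ℤ) (hm : m ≠ 0) :
    ¬IsOfFinOrder (of (ofAdd 1) : BS1 m hm) := fun h =>
  not_isOfFinOrder_ofAdd one_ne_zero (((of_injective _).isOfFinOrder_iff).1 h)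

/-- `⟨x, t | (t x t⁻¹) x (t x t⁻¹)⁻¹ = x ^ m⟩`, realized with `x = of a` and
`t x t⁻¹ = of s`. -/
noncomputable abbrev RhoGroup (m : ℤ) (hm : m ≠ 0) :=
  HNNExtension (BS1 m hm) (zpowers (of (ofAdd 1))) (zpowers t)
    (zpowersMulEquiv (BS1.not_isOfFinOrder_of m hm) (not_isOfFinOrder_t _))

theorem RhoGroup.isTorsionFree (m : ℤ) (hm : m ≠ 0) : Monoid.IsTorsionFree (RhoGroup m hm) :=
  HNNExtension.isTorsionFree _ <| HNNExtension.isTorsionFree _ fun _ hg =>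
    not_isOfFinOrder_of_isMulTorsionFree hg

section RhoWord

variable {G H : Type*} [Group G] [Group H]

theorem map_rhoWord (f : G →* H) (k : ℕ) (x t : G) :
    f (rhoWord k x t) = rhoWord k (f x) (f t) := by
  simp [rhoWord]

theorem rhoWord_eq_one_iff {k : ℕ} {x t : G} :
    rhoWord k x t = 1 ↔ (t * x * t⁻¹) * x * (t * x * t⁻¹)⁻¹ = x ^ (k + 1 : ℤ) := by
  rw [rhoWord, zpow_neg, mul_inv_eq_one]

end RhoWord

abbrev rhoRelators (n : ℕ) : Set (FreeGroup (Fin 2)) :=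
  {rhoWord n (FreeGroup.of 0) (FreeGroup.of 1)}

theorem rhoWord_presentedGroup_of (n : ℕ) :
    rhoWord n (PresentedGroup.of 0 : PresentedGroup (rhoRelators n)) (PresentedGroup.of 1) = 1 := by
  have h := PresentedGroup.one_of_mem (rels := rhoRelators n) rfl
  rwa [map_rhoWord] at h

namespace RhoGroup

variable (n : ℕ)

theorem rhoWord_eq_one :
    rhoWord n (of (of (ofAdd 1)) : RhoGroup (n + 1) (Nat.cast_add_one_ne_zero n)) t = 1 := by
  rw [rhoWord_eq_one_iff, t_mul_of_mul_inv_t, ← map_inv, ← map_mul, ← map_mul, ← map_zpow,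
    t_mul_of_mul_inv_t, ← map_zpow, ← ofAdd_zsmul, smul_eq_mul, mul_one]

noncomputable def ofPresentedGroup :
    PresentedGroup (rhoRelators n) →* RhoGroup (n + 1) (Nat.cast_add_one_ne_zero n) :=
  PresentedGroup.toGroup (f := ![of (of (ofAdd 1)), t]) <| by
    rintro _ rfl
    simpa [map_rhoWord] using rhoWord_eq_one n

noncomputable def toPresentedGroup :
    RhoGroup (n + 1) (Nat.cast_add_one_ne_zero n) →* PresentedGroup (rhoRelators n) :=
  liftZPowers _ _
    (liftZPowers _ _ (zpowersHom _ (PresentedGroup.of 0))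
      (PresentedGroup.of 1 * PresentedGroup.of 0 * (PresentedGroup.of 1)⁻¹)
      (by simpa using rhoWord_eq_one_iff.1 (rhoWord_presentedGroup_of n)))
    (PresentedGroup.of 1) (by simp [liftZPowers])

theorem toPresentedGroup_comp_ofPresentedGroup :
    (toPresentedGroup n).comp (ofPresentedGroup n) = MonoidHom.id _ := by
  refine PresentedGroup.ext fun i => ?_
  fin_cases i <;> simp [toPresentedGroup, ofPresentedGroup, liftZPowers]

theorem ofPresentedGroup_injective : Function.Injective (ofPresentedGroup n) :=
  Function.LeftInverse.injective (g := toPresentedGroup n)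
    (DFunLike.congr_fun (toPresentedGroup_comp_ofPresentedGroup n))

end RhoGroup

theorem oneRelator_torsionFree_general (n : ℕ) :
    ∀ g : PresentedGroup ({rhoWord n (FreeGroup.of 0) (FreeGroup.of 1)} :
        Set (FreeGroup (Fin 2))), g ≠ 1 → ¬IsOfFinOrder g :=
  Monoid.IsTorsionFree.of_injective (RhoGroup.ofPresentedGroup_injective n)
    (RhoGroup.isTorsionFree _ _)

/-- For `n ≥ 1`, the one-relator presented group `⟨x, t | ρ_n(x,t)⟩` is
torsion-free: its only element of finite order is the identity. -/
theorem oneRelator_torsionFree (n : ℕ) (hn : 1 ≤ n) :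
    ∀ g : PresentedGroup ({rhoWord n (FreeGroup.of 0) (FreeGroup.of 1)} :
        Set (FreeGroup (Fin 2))), g ≠ 1 → ¬IsOfFinOrder g :=
  oneRelator_torsionFree_general n
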